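/- arXiv:1701.00150 — 4 statements merged into one kernel-verified Lean document; each statement's English description precedes it below -/
import Mathlib

section
/- An additive functor F has vanishing injective stabilization (F̄ = 0, i.e., ker F(ι) = 0 for every embedding ι of every object into an injective) if and only if F preserves monomorphisms. -/
open CategoryTheory CategoryTheory.Limits

universe u v

theorem AddCommGrpCat.mono_iff_forall_map_eq_zero {A B : AddCommGrpCat} (f : A ⟶ B) :
    Mono f ↔ ∀ x : A, f x = 0 → x = 0 := by
  rw [AddCommGrpCat.mono_iff_injective, injective_iff_map_eq_zero]

/-- `Injective.ι X` factors through any mono `f : X ⟶ Y`. -/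
theorem CategoryTheory.Functor.mono_map_of_mono_map_ι {𝒜 𝒟 : Type*} [Category 𝒜]
    [Category 𝒟] [EnoughInjectives 𝒜] (F : 𝒜 ⥤ 𝒟) {X Y : 𝒜} (f : X ⟶ Y) [Mono f]
    [Mono (F.map (Injective.ι X))] : Mono (F.map f) := by
  have : Mono (F.map f ≫ F.map (Injective.factorThru (Injective.ι X) f)) := by
    rw [← F.map_comp, Injective.comp_factorThru]
    infer_instance
  exact mono_of_mono _ (F.map (Injective.factorThru (Injective.ι X) f))

theorem injective_stabilization_eq_zero_iff_preserves_monos_general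
    {𝒜 : Type u} [Category.{v} 𝒜] [EnoughInjectives 𝒜]
    (F : 𝒜 ⥤ AddCommGrpCat.{v}) :
    (∀ ⦃B I : 𝒜⦄ (ι : B ⟶ I), Mono ι → Injective I →
      ∀ x : F.obj B, F.map ι x = 0 → x = 0) ↔
    (∀ ⦃X Y : 𝒜⦄ (f : X ⟶ Y), Mono f → Mono (F.map f)) := by
  simp only [← AddCommGrpCat.mono_iff_forall_map_eq_zero]
  constructor
  · intro h X Y f _
    have := h (Injective.ι X) inferInstance inferInstance
    exact F.mono_map_of_mono_map_ι f
  · exact fun h B I ι hι _ => h ι hι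

/-- `F̄ = 0` (the kernel of `F(ι)` is trivial for every embedding `ι` of any object into
an injective) if and only if `F` preserves monomorphisms. -/
theorem injective_stabilization_eq_zero_iff_preserves_monos
    {𝒜 : Type u} [Category.{v} 𝒜] [Abelian 𝒜] [EnoughInjectives 𝒜]
    (F : 𝒜 ⥤ AddCommGrpCat.{v}) [F.Additive] :
    (∀ ⦃B I : 𝒜⦄ (ι : B ⟶ I), Mono ι → Injective I →
      ∀ x : F.obj B, F.map ι x = 0 → x = 0) ↔
    (∀ ⦃X Y : 𝒜⦄ (f : X ⟶ Y), Mono f → Mono (F.map f)) :=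
  injective_stabilization_eq_zero_iff_preserves_monos_general F
end

section
/- Characterization of the injective stabilization via a comparison transformation: if F, F' are additive functors, F' preserves monomorphisms, and γ : F → F' evaluates to an isomorphism on every injective object, then ker γ equals the injective stabilization of F (i.e., ker γ is the largest subfunctor of F vanishing on injectives). -/
open CategoryTheory CategoryTheory.Limits

universe u v

/-- Characterization of the injective stabilization via a comparison transformation:
if `F'` preserves monomorphisms and `γ : F ⟶ F'` is an isomorphism on every injective,
then `ker γ` is the injective stabilization of `F`: elementwise, `γ_B x = 0` if and only
if `x` lies in `ker F(ι)` for every embedding `ι : B ⟶ I` into an injective. -/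
theorem kernel_of_comparison_is_injective_stabilization
    {𝒜 : Type u} [Category.{v} 𝒜] [Abelian 𝒜] [EnoughInjectives 𝒜]
    (F F' : 𝒜 ⥤ AddCommGrpCat.{v}) [F.Additive] [F'.Additive]
    (γ : F ⟶ F')
    (hF' : ∀ ⦃X Y : 𝒜⦄ (f : X ⟶ Y), Mono f → Function.Injective (F'.map f))
    (hγ : ∀ I : 𝒜, Injective I → Function.Bijective (γ.app I)) :
    ∀ ⦃B I : 𝒜⦄ (ι : B ⟶ I), Mono ι → Injective I →
      ∀ x : F.obj B, (γ.app B x = 0 ↔ F.map ι x = 0) := by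
  intro B I ι hmono hinj x
  have hnat : F'.map ι (γ.app B x) = γ.app I (F.map ι x) := by
    have := ConcreteCategory.congr_hom (γ.naturality ι) x
    simp only [CategoryTheory.comp_apply] at this
    exact this.symm
  constructor
  · intro h
    have h0 : γ.app I (F.map ι x) = 0 := by
      rw [← hnat, h, map_zero]
    have := (hγ I hinj).1
    have hz : γ.app I (F.map ι x) = γ.app I 0 := by rw [h0, map_zero]
    exact this hz
  · intro h
    have h0 : F'.map ι (γ.app B x) = 0 := by rw [hnat, h, map_zero]
    have hz : F'.map ι (γ.app B x) = F'.map ι 0 := by rw [h0, map_zero]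
    exact hF' ι hmono hz
end

section
/- The injective stabilization of a half-exact functor is half-exact: if F : 𝒜 → Ab is additive and for every short exact sequence 0 → A → B → C → 0 the sequence F(A) → F(B) → F(C) is exact, then for every short exact sequence the sequence F̄(A) → F̄(B) → F̄(C) is exact. -/
open CategoryTheory CategoryTheory.Limits

universe u v

/-!
Half-exactness of `F` gives a preimage `x ∈ F(A)` of `y`, and `x` lies in `F̄(A)` automatically:
as `IA` is injective, `ιA` factors as `(f ≫ ιB) ≫ k`, so `F(ιA) x = F(k) (F(ιB) y) = 0`.
-/

lemma map_eq_zero_of_map_mono_eq_zero {𝒜 : Type u} [Category.{v} 𝒜]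
    (F : 𝒜 ⥤ AddCommGrpCat.{v}) {A I J : 𝒜} (m : A ⟶ J) [Mono m] (ι : A ⟶ I) [Injective I]
    {x : F.obj A} (hx : F.map m x = 0) : F.map ι x = 0 := by
  rw [← Injective.comp_factorThru ι m, F.map_comp, ConcreteCategory.comp_apply, hx, map_zero]

theorem injective_stabilization_half_exact_general
    {𝒜 : Type u} [Category.{v} 𝒜] [Abelian 𝒜]
    (F : 𝒜 ⥤ AddCommGrpCat.{v}) [F.Additive]
    (hF : ∀ (S : ShortComplex 𝒜), S.ShortExact → (S.map F).Exact)
    (S : ShortComplex 𝒜) (hS : S.ShortExact)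
    {IA IB : 𝒜} (ιA : S.X₁ ⟶ IA) (ιB : S.X₂ ⟶ IB)
    [Mono ιB] [Injective IA]
    (y : F.obj S.X₂) (hy : F.map ιB y = 0) (hgy : F.map S.g y = 0) :
    ∃ x : F.obj S.X₁, F.map ιA x = 0 ∧ F.map S.f x = y := by
  have := hS.mono_f
  obtain ⟨x : F.obj S.X₁, hfx : F.map S.f x = y⟩ := (S.map F).ab_exact_iff.mp (hF S hS) y hgy
  refine ⟨x, map_eq_zero_of_map_mono_eq_zero F (S.f ≫ ιB) ιA ?_, hfx⟩
  rw [F.map_comp, ConcreteCategory.comp_apply, hfx, hy]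

/-- The injective stabilization of a half-exact functor is half-exact: if `F` sends every
short exact sequence `0 → A → B → C → 0` to an exact sequence `F(A) → F(B) → F(C)`, then
for any short exact sequence and any embeddings of the three terms into injectives, the
induced sequence of kernels `F̄(A) → F̄(B) → F̄(C)` is exact (stated elementwise: every
element of `F̄(B)` killed by `F(g)` is the image under `F(f)` of an element of `F̄(A)`). -/
theorem injective_stabilization_half_exact
    {𝒜 : Type u} [Category.{v} 𝒜] [Abelian 𝒜] [EnoughInjectives 𝒜]
    (F : 𝒜 ⥤ AddCommGrpCat.{v}) [F.Additive]
    (hF : ∀ (S : ShortComplex 𝒜), S.ShortExact → (S.map F).Exact)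
    (S : ShortComplex 𝒜) (hS : S.ShortExact)
    {IA IB IC : 𝒜} (ιA : S.X₁ ⟶ IA) (ιB : S.X₂ ⟶ IB) (ιC : S.X₃ ⟶ IC)
    [Mono ιA] [Mono ιB] [Mono ιC] [Injective IA] [Injective IB] [Injective IC]
    (y : F.obj S.X₂) (hy : F.map ιB y = 0) (hgy : F.map S.g y = 0) :
    ∃ x : F.obj S.X₁, F.map ιA x = 0 ∧ F.map S.f x = y :=
  injective_stabilization_half_exact_general F hF S hS ιA ιB y hy hgy
end

section
/- If the injective stabilization of a right-exact functor F preserves epimorphisms, then F(i) is a monomorphism for every monomorphism i whose domain is a quotient of an injective object (a cosyzygy object). -/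
open CategoryTheory CategoryTheory.Limits

universe u v

/-- If the injective stabilization `F̄` of a right-exact functor `F` preserves
epimorphisms (stated elementwise), then every cosyzygy object (quotient of an injective)
has property A with respect to `F`: `F` sends monomorphisms out of it to monomorphisms. -/
theorem cosyzygy_property_A_of_injective_stabilization_preserves_epis
    {𝒜 : Type u} [Category.{v} 𝒜] [Abelian 𝒜] [EnoughInjectives 𝒜]
    (F : 𝒜 ⥤ AddCommGrpCat.{v}) [F.Additive] [PreservesFiniteColimits F]
    -- `F̄` preserves epimorphisms
    (h : ∀ ⦃X Y : 𝒜⦄ (p : X ⟶ Y), Epi p →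
      ∀ ⦃IX IY : 𝒜⦄ (ιX : X ⟶ IX) (ιY : Y ⟶ IY),
        Mono ιX → Mono ιY → Injective IX → Injective IY →
      ∀ z : F.obj Y, F.map ιY z = 0 →
        ∃ x : F.obj X, F.map ιX x = 0 ∧ F.map p x = z)
    -- `C` is a cosyzygy object: a quotient of an injective `I`
    {I C : 𝒜} [Injective I] (q : I ⟶ C) [Epi q]
    -- any monomorphism out of `C` is sent by `F` to a monomorphism
    {D : 𝒜} (i : C ⟶ D) [Mono i] :
    Function.Injective (F.map i) := by
  rw [injective_iff_map_eq_zero]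
  intro z hz
  obtain ⟨x, hx, hq⟩ := h q inferInstance (𝟙 I) (i ≫ Injective.ι D)
    inferInstance inferInstance inferInstance inferInstance z
    (by rw [F.map_comp, AddCommGrpCat.coe_comp, Function.comp_apply, hz, map_zero])
  rw [F.map_id] at hx
  rw [← hq]
  simp at hx
  rw [hx, map_zero]
end
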